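/- Let q ∈ ℝ^d be nonzero, K = {k_1,...,k_n} ⊂ ℝ^d keys and v_1,...,v_n values with ‖v_i‖₂ > 0. With attention scores a_i the softmax of ⟨q,k_i⟩, set u_i = (k_i, log‖v_i‖₂) ∈ ℝ^{d+1}, M = max_i ‖u_i‖₂, ψ(u_i) = (u_i, √(M²−‖u_i‖₂²)) and φ(q) = (q, 1, 0). Then argmax_i a_i‖v_i‖₂ = argmax_i cos(φ(q), ψ(u_i)) whenever the maximizer is unique. -/

import Mathlib

open scoped RealInnerProductSpace

/-- Cosine similarity of two vectors. -/
noncomputable def cosSim {m : ℕ} (u v : EuclideanSpace ℝ (Fin m)) : ℝ :=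
  ⟪u, v⟫ / (‖u‖ * ‖v‖)

/-- Snoc with a type ascription keeping the Euclidean structure. -/
def esnoc {m : ℕ} (x : EuclideanSpace ℝ (Fin m)) (a : ℝ) :
    EuclideanSpace ℝ (Fin (m + 1)) :=
  WithLp.toLp 2 (Fin.snoc (WithLp.ofLp x) a)

lemma inner_esnoc {m : ℕ} (x y : EuclideanSpace ℝ (Fin m)) (a b : ℝ) :
    ⟪esnoc x a, esnoc y b⟫ = ⟪x, y⟫ + a * b := by
  simp [esnoc, PiLp.inner_apply, RCLike.inner_apply, Fin.sum_univ_castSucc, mul_comm]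

lemma norm_esnoc_sq {m : ℕ} (x : EuclideanSpace ℝ (Fin m)) (a : ℝ) :
    ‖esnoc x a‖ ^ 2 = ‖x‖ ^ 2 + a ^ 2 := by
  rw [← real_inner_self_eq_norm_sq, ← real_inner_self_eq_norm_sq, inner_esnoc]
  ring

/-- The unique maximizer of `a_i ‖v_i‖` is also the unique maximizer of the
cosine similarity between the asymmetrically transformed query and the
transformed augmented keys. -/
theorem argmax_attention_eq_argmax_cosine {n d : ℕ}
    (q : EuclideanSpace ℝ (Fin d)) (hq : q ≠ 0)
    (k v : Fin n → EuclideanSpace ℝ (Fin d)) (hv : ∀ i, 0 < ‖v i‖)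
    (a : Fin n → ℝ)
    (ha : ∀ i, a i = Real.exp ⟪q, k i⟫ / ∑ t, Real.exp ⟪q, k t⟫)
    (u : Fin n → EuclideanSpace ℝ (Fin (d + 1)))
    (hu : ∀ i, u i = WithLp.toLp 2 (Fin.snoc (WithLp.ofLp (k i)) (Real.log ‖v i‖)))
    (M : ℝ) (hM₁ : ∀ i, ‖u i‖ ≤ M) (hM₂ : ∃ i, ‖u i‖ = M)
    (j : Fin n) (hj : ∀ i, i ≠ j → a i * ‖v i‖ < a j * ‖v j‖) :
    ∀ i, i ≠ j →
      cosSim (WithLp.toLp 2 (Fin.snoc (Fin.snoc (WithLp.ofLp q) 1) 0) : EuclideanSpace ℝ (Fin (d + 1 + 1)))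
          (WithLp.toLp 2 (Fin.snoc (WithLp.ofLp (u i)) (Real.sqrt (M ^ 2 - ‖u i‖ ^ 2)))) <
      cosSim (WithLp.toLp 2 (Fin.snoc (Fin.snoc (WithLp.ofLp q) 1) 0) : EuclideanSpace ℝ (Fin (d + 1 + 1)))
          (WithLp.toLp 2 (Fin.snoc (WithLp.ofLp (u j)) (Real.sqrt (M ^ 2 - ‖u j‖ ^ 2)))) := by
  intro i hi
  have hu' : ∀ t, u t = esnoc (k t) (Real.log ‖v t‖) := hu
  have hS : (0:ℝ) < ∑ t, Real.exp ⟪q, k t⟫ :=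
    Finset.sum_pos (fun t _ => Real.exp_pos _) ⟨j, Finset.mem_univ j⟩
  have hM0 : 0 ≤ M := le_trans (norm_nonneg _) (hM₁ j)
  have hMpos : 0 < M := by
    rcases hM0.lt_or_eq with h | h
    · exact h
    · exfalso
      have hz : ∀ t : Fin n, u t = 0 := fun t => norm_le_zero_iff.mp (h ▸ hM₁ t)
      have hv1 : ∀ t : Fin n, Real.log ‖v t‖ = 0 ∧ ⟪q, k t⟫ = ⟪q, (0 : EuclideanSpace ℝ (Fin d))⟫ := by
        intro t
        have hlog : Real.log ‖v t‖ = 0 := by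
          have := congrArg (fun w => w (Fin.last d)) (hz t)
          rw [hu t] at this
          simpa using this
        have hk : k t = 0 := by
          ext s
          have := congrArg (fun w => w (Fin.castSucc s)) (hz t)
          rw [hu t] at this
          simpa using this
        exact ⟨hlog, by rw [hk]⟩
      have hvn : ∀ t : Fin n, ‖v t‖ = 1 := by
        intro t
        have := Real.exp_log (hv t)
        rw [(hv1 t).1] at this
        simpa using this.symm
      have : a i * ‖v i‖ = a j * ‖v j‖ := by
        rw [ha i, ha j, hvn i, hvn j, (hv1 i).2, (hv1 j).2]
      exact absurd this (ne_of_lt (hj i hi))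
  have hnorm : ∀ t : Fin n, ‖esnoc (u t) (Real.sqrt (M ^ 2 - ‖u t‖ ^ 2))‖ = M := by
    intro t
    have hle : ‖u t‖ ^ 2 ≤ M ^ 2 := by
      have := hM₁ t
      nlinarith [norm_nonneg (u t)]
    have h1 : ‖esnoc (u t) (Real.sqrt (M ^ 2 - ‖u t‖ ^ 2))‖ ^ 2 = M ^ 2 := by
      rw [norm_esnoc_sq, Real.sq_sqrt (by linarith)]
      ring
    have := congrArg Real.sqrt h1
    rwa [Real.sqrt_sq (norm_nonneg _), Real.sqrt_sq hM0] at this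
  have hinner : ∀ t : Fin n,
      ⟪esnoc (esnoc q 1) 0, esnoc (u t) (Real.sqrt (M ^ 2 - ‖u t‖ ^ 2))⟫
        = ⟪q, k t⟫ + Real.log ‖v t‖ := by
    intro t
    rw [inner_esnoc, hu' t, inner_esnoc]
    ring
  have hphi : 0 < ‖esnoc (esnoc q 1) 0‖ := by
    have h1 : ‖esnoc (esnoc q 1) 0‖ ^ 2 = ‖q‖ ^ 2 + 1 := by
      rw [norm_esnoc_sq, norm_esnoc_sq]; ring
    nlinarith [norm_nonneg (esnoc (esnoc q 1) 0), sq_nonneg ‖q‖]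
  have hkey : ⟪q, k i⟫ + Real.log ‖v i‖ < ⟪q, k j⟫ + Real.log ‖v j‖ := by
    have h := hj i hi
    rw [ha i, ha j] at h
    have h2 : Real.exp ⟪q, k i⟫ * ‖v i‖ < Real.exp ⟪q, k j⟫ * ‖v j‖ := by
      rw [div_mul_eq_mul_div, div_mul_eq_mul_div, div_lt_div_iff₀ hS hS] at h
      nlinarith
    have e1 : Real.exp ⟪q, k i⟫ * ‖v i‖ = Real.exp (⟪q, k i⟫ + Real.log ‖v i‖) := by
      rw [Real.exp_add, Real.exp_log (hv i)]
    have e2 : Real.exp ⟪q, k j⟫ * ‖v j‖ = Real.exp (⟪q, k j⟫ + Real.log ‖v j‖) := by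
      rw [Real.exp_add, Real.exp_log (hv j)]
    rw [e1, e2] at h2
    exact Real.exp_lt_exp.mp h2
  show cosSim (esnoc (esnoc q 1) 0) (esnoc (u i) (Real.sqrt (M ^ 2 - ‖u i‖ ^ 2))) <
      cosSim (esnoc (esnoc q 1) 0) (esnoc (u j) (Real.sqrt (M ^ 2 - ‖u j‖ ^ 2)))
  unfold cosSim
  rw [hnorm i, hnorm j, hinner i, hinner j]
  exact (div_lt_div_iff_of_pos_right (mul_pos hphi hMpos)).mpr hkey
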